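/- arXiv:1608.01671 — 2 statements merged into one kernel-verified Lean document; each statement's English description precedes it below -/
import Mathlib

section
/- For every integer n ≥ 0, the (n+1)st prime number satisfies p_{n+1} = lim_{s→∞} (1 - Q_n(s)/ζ(s))^{-1/s}, where the limit is taken over real s tending to infinity. -/
open Filter Real

noncomputable def zetaR (s : ℝ) : ℝ := ∑' m : ℕ, (m : ℝ) ^ (-s)

/-- `P k` is the (k+1)-st prime: `P 0 = 2`, `P 1 = 3`, ... -/
noncomputable def P (k : ℕ) : ℕ := Nat.nth Nat.Prime k

/-- Partial Euler product `Q n s = ∏_{k=1}^n (1 - p_k^{-s})⁻¹`. -/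
noncomputable def Q (n : ℕ) (s : ℝ) : ℝ := ∏ k ∈ Finset.range n, (1 - (P k : ℝ) ^ (-s))⁻¹

/-!
By the Euler product, `Q n s` is the sum of `m^{-s}` over the `p`-smooth numbers `m`, where
`p = p_{n+1}`, so `ζ(s) - Q n s` is the sum over the numbers with a prime factor `≥ p`.
That sum contains the term `p^{-s}` and is at most `p^{2-s} ζ(2)`, since all its terms have `m ≥ p`.
As `1 ≤ ζ(s) ≤ ζ(2)`, the quantity `1 - Q n s / ζ(s)` is `p^{-s}` up to bounded positive factors,
and these factors disappear under `x ↦ x^{-1/s}` as `s → ∞`.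
-/

open Topology

lemma summable_nat_rpow_neg {s : ℝ} (hs : 1 < s) : Summable (fun m : ℕ => (m : ℝ) ^ (-s)) :=
  Real.summable_nat_rpow.mpr (neg_lt_neg hs)

lemma one_le_zetaR {s : ℝ} (hs : 1 < s) : 1 ≤ zetaR s := by
  simpa [zetaR] using (summable_nat_rpow_neg hs).le_tsum 1 fun m _ => by positivity

lemma zetaR_le_zetaR {s t : ℝ} (ht : 1 < t) (hts : t ≤ s) : zetaR s ≤ zetaR t := by
  refine (summable_nat_rpow_neg (ht.trans_le hts)).tsum_le_tsum (fun m => ?_)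
    (summable_nat_rpow_neg ht)
  rcases Nat.eq_zero_or_pos m with rfl | hm
  · simp [Real.zero_rpow (by linarith : -s ≠ 0), Real.zero_rpow (by linarith : -t ≠ 0)]
  · exact Real.rpow_le_rpow_of_exponent_le (by exact_mod_cast hm) (neg_le_neg hts)

noncomputable def natRpowNegHom (s : ℝ) : ℕ →* ℝ where
  toFun m := (m : ℝ) ^ (-s)
  map_one' := by simp
  map_mul' m k := by
    push_cast
    exact Real.mul_rpow (Nat.cast_nonneg m) (Nat.cast_nonneg k)

lemma P_prime (k : ℕ) : (P k).Prime :=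
  Nat.prime_nth_prime k

lemma P_injective : Function.Injective P :=
  Nat.nth_injective Nat.infinite_setOfPred_prime

lemma primesBelow_P (n : ℕ) : (P n).primesBelow = (Finset.range n).image P := by
  ext q
  simp only [Nat.primesBelow, Finset.mem_filter, Finset.mem_range, Finset.mem_image]
  constructor
  · rintro ⟨hq, hq_prime⟩
    refine ⟨Nat.count Nat.Prime q, ?_, Nat.nth_count hq_prime⟩
    by_contra! h
    have := (Nat.nth_le_nth Nat.infinite_setOfPred_prime).mpr h
    rw [Nat.nth_count hq_prime] at this
    exact absurd hq (not_lt.mpr this)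
  · rintro ⟨k, hk, rfl⟩
    exact ⟨(Nat.nth_lt_nth Nat.infinite_setOfPred_prime).mpr hk, P_prime k⟩

lemma Q_eq_tsum_smoothNumbers {s : ℝ} (hs : 1 < s) (n : ℕ) :
    Q n s = ∑' m : (P n).smoothNumbers, ((m : ℕ) : ℝ) ^ (-s) := by
  have h := EulerProduct.prod_primesBelow_geometric_eq_tsum_smoothNumbers
    (f := natRpowNegHom s) (summable_nat_rpow_neg hs) (P n)
  rw [primesBelow_P, Finset.prod_image P_injective.injOn] at h
  simpa [Q, natRpowNegHom] using h

lemma zetaR_sub_Q_eq_tsum_compl {s : ℝ} (hs : 1 < s) (n : ℕ) :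
    zetaR s - Q n s = ∑' m : ↑((P n).smoothNumbers)ᶜ, ((m : ℕ) : ℝ) ^ (-s) := by
  rw [zetaR, Q_eq_tsum_smoothNumbers hs n,
    ← (summable_nat_rpow_neg hs).tsum_subtype_add_tsum_subtype_compl (P n).smoothNumbers]
  ring

lemma rpow_neg_le_tsum_compl_smoothNumbers {p : ℕ} (hp : p.Prime) {s : ℝ} (hs : 1 < s) :
    (p : ℝ) ^ (-s) ≤ ∑' m : ↑(p.smoothNumbers)ᶜ, ((m : ℕ) : ℝ) ^ (-s) := by
  have hp_compl : p ∈ (p.smoothNumbers)ᶜ := fun h =>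
    lt_irrefl p (Nat.mem_smoothNumbers'.mp h p hp dvd_rfl)
  exact ((summable_nat_rpow_neg hs).subtype _).le_tsum ⟨p, hp_compl⟩
    fun m _ => Real.rpow_nonneg (Nat.cast_nonneg _) _

lemma tsum_compl_smoothNumbers_le {N : ℕ} (hN : 0 < N) {s : ℝ} (hs : 2 ≤ s) :
    ∑' m : ↑(N.smoothNumbers)ᶜ, ((m : ℕ) : ℝ) ^ (-s) ≤ (N : ℝ) ^ (2 - s) * zetaR 2 := by
  have hs1 : (1 : ℝ) < s := by linarith
  have hterm : ∀ m : ↑(N.smoothNumbers)ᶜ,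
      ((m : ℕ) : ℝ) ^ (-s) ≤ (N : ℝ) ^ (2 - s) * ((m : ℕ) : ℝ) ^ (-(2 : ℝ)) := by
    rintro ⟨m, hm⟩
    rcases Nat.eq_zero_or_pos m with rfl | hm0
    · simp [Real.zero_rpow (by linarith : -s ≠ 0)]
    · have hNm : N ≤ m := Nat.smoothNumbers_compl N ⟨hm, hm0.ne'⟩
      have hm_pos : (0 : ℝ) < m := by exact_mod_cast hm0
      calc ((m : ℕ) : ℝ) ^ (-s) = (m : ℝ) ^ (2 - s) * (m : ℝ) ^ (-(2 : ℝ)) := by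
            rw [← Real.rpow_add hm_pos]; ring_nf
        _ ≤ (N : ℝ) ^ (2 - s) * (m : ℝ) ^ (-(2 : ℝ)) := by
            refine mul_le_mul_of_nonneg_right ?_ (by positivity)
            exact Real.rpow_le_rpow_of_nonpos (by exact_mod_cast hN) (by exact_mod_cast hNm)
              (by linarith)
  have hsum2 := (summable_nat_rpow_neg one_lt_two).mul_left ((N : ℝ) ^ (2 - s))
  calc ∑' m : ↑(N.smoothNumbers)ᶜ, ((m : ℕ) : ℝ) ^ (-s)
      ≤ ∑' m : ↑(N.smoothNumbers)ᶜ, (N : ℝ) ^ (2 - s) * ((m : ℕ) : ℝ) ^ (-(2 : ℝ)) :=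
        ((summable_nat_rpow_neg hs1).subtype _).tsum_le_tsum hterm (hsum2.subtype _)
    _ ≤ ∑' m : ℕ, (N : ℝ) ^ (2 - s) * (m : ℝ) ^ (-(2 : ℝ)) :=
        hsum2.tsum_subtype_le _ _ fun m => by positivity
    _ = (N : ℝ) ^ (2 - s) * zetaR 2 := tsum_mul_left

lemma one_sub_Q_div_zetaR_bounds (n : ℕ) {s : ℝ} (hs : 2 ≤ s) :
    (zetaR 2)⁻¹ * (P n : ℝ) ^ (-s) ≤ 1 - Q n s / zetaR s ∧
      1 - Q n s / zetaR s ≤ ((P n : ℝ) ^ (2 : ℝ) * zetaR 2) * (P n : ℝ) ^ (-s) := by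
  have hs1 : (1 : ℝ) < s := by linarith
  have hp_pos : (0 : ℝ) < P n := by exact_mod_cast (P_prime n).pos
  have hζ := one_le_zetaR hs1
  have hlow : (P n : ℝ) ^ (-s) ≤ zetaR s - Q n s := by
    rw [zetaR_sub_Q_eq_tsum_compl hs1]
    exact rpow_neg_le_tsum_compl_smoothNumbers (P_prime n) hs1
  have hup : zetaR s - Q n s ≤ (P n : ℝ) ^ (2 - s) * zetaR 2 := by
    rw [zetaR_sub_Q_eq_tsum_compl hs1]
    exact tsum_compl_smoothNumbers_le (P_prime n).pos hs
  have hdiff_nonneg : 0 ≤ zetaR s - Q n s := (by positivity : (0 : ℝ) ≤ _).trans hlow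
  have hrewrite : 1 - Q n s / zetaR s = (zetaR s - Q n s) / zetaR s := by
    field_simp
  rw [hrewrite]
  constructor
  · rw [inv_mul_eq_div]
    exact div_le_div₀ hdiff_nonneg hlow (by linarith) (zetaR_le_zetaR one_lt_two hs)
  · calc (zetaR s - Q n s) / zetaR s ≤ zetaR s - Q n s := div_le_self hdiff_nonneg hζ
      _ ≤ (P n : ℝ) ^ (2 - s) * zetaR 2 := hup
      _ = ((P n : ℝ) ^ (2 : ℝ) * zetaR 2) * (P n : ℝ) ^ (-s) := by
        rw [sub_eq_add_neg, Real.rpow_add hp_pos]; ring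

lemma tendsto_const_mul_rpow_neg_rpow_neg_one_div {c p : ℝ} (hc : 0 < c) (hp : 0 < p) :
    Tendsto (fun s : ℝ => (c * p ^ (-s)) ^ (-1 / s)) atTop (𝓝 p) := by
  have hc_pow : Tendsto (fun s : ℝ => c ^ (-1 / s) * p) atTop (𝓝 p) := by
    have hexp : Tendsto (fun s : ℝ => -1 / s) atTop (𝓝 0) :=
      tendsto_const_nhds.div_atTop tendsto_id
    simpa using ((Real.continuousAt_const_rpow (b := 0) hc.ne').tendsto.comp hexp).mul_const p
  refine hc_pow.congr' ?_
  filter_upwards [eventually_gt_atTop 0] with s hs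
  rw [Real.mul_rpow hc.le (by positivity), ← Real.rpow_mul hp.le,
    show -s * (-1 / s) = 1 by field_simp, Real.rpow_one]

lemma tendsto_rpow_neg_one_div_of_le_of_le {f : ℝ → ℝ} {a b p : ℝ} (ha : 0 < a) (hb : 0 < b)
    (hp : 0 < p) (hlow : ∀ᶠ s in atTop, a * p ^ (-s) ≤ f s)
    (hup : ∀ᶠ s in atTop, f s ≤ b * p ^ (-s)) :
    Tendsto (fun s => f s ^ (-1 / s)) atTop (𝓝 p) := by
  have hexp : ∀ᶠ s : ℝ in atTop, -1 / s ≤ 0 := by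
    filter_upwards [eventually_gt_atTop 0] with s hs
    exact div_nonpos_of_nonpos_of_nonneg (by norm_num) hs.le
  refine tendsto_of_tendsto_of_tendsto_of_le_of_le'
    (tendsto_const_mul_rpow_neg_rpow_neg_one_div hb hp)
    (tendsto_const_mul_rpow_neg_rpow_neg_one_div ha hp) ?_ ?_
  · filter_upwards [hlow, hup, hexp] with s hl hu he
    exact Real.rpow_le_rpow_of_nonpos ((by positivity : 0 < a * p ^ (-s)).trans_le hl) hu he
  · filter_upwards [hlow, hexp] with s hl he
    exact Real.rpow_le_rpow_of_nonpos (by positivity) hl he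

theorem golomb_main (n : ℕ) :
    Tendsto (fun s : ℝ => (1 - Q n s / zetaR s) ^ (-1 / s)) atTop (nhds (P n : ℝ)) := by
  have hp_pos : (0 : ℝ) < P n := by exact_mod_cast (P_prime n).pos
  have hζ2_pos : 0 < zetaR 2 := one_pos.trans_le (one_le_zetaR one_lt_two)
  have hbounds := (eventually_ge_atTop 2).mono fun s hs => one_sub_Q_div_zetaR_bounds n hs
  exact tendsto_rpow_neg_one_div_of_le_of_le (inv_pos.mpr hζ2_pos) (by positivity) hp_pos
    (hbounds.mono fun _ h => h.1) (hbounds.mono fun _ h => h.2)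
end

section
/- The limit as real s → ∞ of (1 - 1/(ζ(s)(1 - 2^{-s})))^{-1/s} equals 3. -/
open Filter Real

/-!
Multiplying by `1 - 2^{-s}` removes the even terms from `ζ(s)`, leaving the Dirichlet lambda
function `λ(s) = ∑ (2k+1)^{-s} = 1 + 3^{-s} + ∑ (2k+5)^{-s}`. Dominated convergence gives
`3^s (λ(s) - 1) → 1`, hence `λ(s) → 1` and `3^s (1 - 1/λ(s)) → 1`; a quantity `g(s)` with
`3^s g(s)` tending to a positive limit satisfies `g(s)^{-1/s} → 3`.
-/

open Topology

noncomputable def dirichletLambda (s : ℝ) : ℝ := ∑' k : ℕ, (2 * k + 1 : ℝ) ^ (-s)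

lemma tendsto_tsum_rpow_atTop_zero {r : ℕ → ℝ} {s₀ : ℝ} (hr₀ : ∀ k, 0 < r k)
    (hr₁ : ∀ k, r k < 1) (hs₀ : Summable fun k => r k ^ s₀) :
    Tendsto (fun s : ℝ => ∑' k, r k ^ s) atTop (𝓝 0) := by
  have hbound : ∀ᶠ s : ℝ in atTop, ∀ k, ‖r k ^ s‖ ≤ r k ^ s₀ := by
    filter_upwards [eventually_ge_atTop s₀] with s hs k
    rw [norm_of_nonneg (rpow_nonneg (hr₀ k).le _)]
    exact rpow_le_rpow_of_exponent_ge (hr₀ k) (hr₁ k).le hs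
  simpa using tendsto_tsum_of_dominated_convergence hs₀
    (fun k => tendsto_rpow_atTop_of_base_lt_one (r k) (by linarith [hr₀ k]) (hr₁ k)) hbound

lemma tendsto_rpow_neg_one_div_of_tendsto_rpow_mul {g : ℝ → ℝ} {a c : ℝ} (ha : 0 < a)
    (hc : 0 < c) (hg : Tendsto (fun s => a ^ s * g s) atTop (𝓝 c)) :
    Tendsto (fun s => g s ^ (-1 / s)) atTop (𝓝 a) := by
  have hexp : Tendsto (fun s : ℝ => -1 / s) atTop (𝓝 0) :=
    tendsto_const_nhds.div_atTop tendsto_id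
  have hlim : Tendsto (fun s => a * (a ^ s * g s) ^ (-1 / s)) atTop (𝓝 a) := by
    simpa using (hg.rpow hexp (Or.inl hc.ne')).const_mul a
  refine hlim.congr' ?_
  filter_upwards [eventually_gt_atTop 0, hg.eventually (eventually_gt_nhds hc)] with s hs hpos
  have has : 0 < a ^ s := rpow_pos_of_pos ha s
  have hgs : 0 ≤ g s := (pos_of_mul_pos_right hpos has.le).le
  rw [mul_rpow has.le hgs, ← rpow_mul ha.le, mul_div_cancel₀ _ hs.ne', rpow_neg_one,
    mul_inv_cancel_left₀ ha.ne']

lemma summable_odd_rpow_neg {s : ℝ} (hs : 1 < s) :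
    Summable fun k : ℕ => (2 * k + 1 : ℝ) ^ (-s) := by
  have hsum : Summable fun m : ℕ => (m : ℝ) ^ (-s) := summable_nat_rpow.mpr (by linarith)
  have hinj : Function.Injective fun k : ℕ => 2 * k + 1 := fun _ _ h => by simp only at h; omega
  exact (hsum.comp_injective hinj).congr fun k => by simp

lemma zetaR_mul_one_sub_two_rpow {s : ℝ} (hs : 1 < s) :
    zetaR s * (1 - 2 ^ (-s)) = dirichletLambda s := by
  have hsum : Summable fun m : ℕ => (m : ℝ) ^ (-s) := summable_nat_rpow.mpr (by linarith)
  have heven : ∑' k : ℕ, (2 * k : ℝ) ^ (-s) = 2 ^ (-s) * zetaR s := by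
    simp_rw [mul_rpow zero_le_two (Nat.cast_nonneg _)]
    exact tsum_mul_left
  have hsplit : 2 ^ (-s) * zetaR s + dirichletLambda s = zetaR s := by
    rw [← heven, dirichletLambda, zetaR]
    exact_mod_cast tsum_even_add_odd (f := fun m : ℕ => (m : ℝ) ^ (-s))
      (hsum.comp_injective (mul_right_injective₀ two_ne_zero))
      (by simpa using summable_odd_rpow_neg hs)
  linarith

lemma dirichletLambda_eq {s : ℝ} (hs : 1 < s) :
    dirichletLambda s = 1 + 3 ^ (-s) + ∑' k : ℕ, (2 * k + 5 : ℝ) ^ (-s) := by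
  rw [dirichletLambda, ← (summable_odd_rpow_neg hs).sum_add_tsum_nat_add 2]
  norm_num [Finset.sum_range_succ]
  ring_nf

lemma div_rpow_eq_rpow_mul_rpow_neg {a x : ℝ} (ha : 0 ≤ a) (hx : 0 ≤ x) (s : ℝ) :
    (a / x) ^ s = a ^ s * x ^ (-s) := by
  rw [div_rpow ha hx, rpow_neg hx, div_eq_mul_inv]

lemma tendsto_three_rpow_mul_dirichletLambda_sub_one :
    Tendsto (fun s => 3 ^ s * (dirichletLambda s - 1)) atTop (𝓝 1) := by
  have hsum : Summable fun k : ℕ => (3 / (2 * k + 5) : ℝ) ^ (2 : ℝ) := by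
    have h := (summable_nat_add_iff 2).mpr (summable_odd_rpow_neg one_lt_two)
    refine (h.mul_left (3 ^ (2 : ℝ))).congr fun k => ?_
    rw [div_rpow_eq_rpow_mul_rpow_neg (by norm_num) (by positivity)]
    push_cast; ring_nf
  have htail : Tendsto (fun s : ℝ => ∑' k : ℕ, (3 / (2 * k + 5) : ℝ) ^ s) atTop (𝓝 0) :=
    tendsto_tsum_rpow_atTop_zero (fun k => by positivity)
      (fun k => (div_lt_one (by positivity)).mpr (by linarith [k.cast_nonneg (α := ℝ)])) hsum
  refine (by simpa using htail.const_add 1 : Tendsto _ _ _).congr' ?_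
  filter_upwards [eventually_gt_atTop 1] with s hs
  have hterm (k : ℕ) : (3 / (2 * k + 5) : ℝ) ^ s = 3 ^ s * (2 * k + 5 : ℝ) ^ (-s) :=
    div_rpow_eq_rpow_mul_rpow_neg zero_le_three (by positivity) s
  simp_rw [dirichletLambda_eq hs, hterm, tsum_mul_left]
  have h3 : (3 : ℝ) ^ s * 3 ^ (-s) = 1 := by
    rw [← rpow_add three_pos, add_neg_cancel, rpow_zero]
  linear_combination -h3

lemma one_lt_dirichletLambda {s : ℝ} (hs : 1 < s) : 1 < dirichletLambda s := by
  have htail : 0 ≤ ∑' k : ℕ, (2 * k + 5 : ℝ) ^ (-s) := tsum_nonneg fun k => by positivity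
  rw [dirichletLambda_eq hs]
  linarith [rpow_pos_of_pos three_pos (-s)]

lemma tendsto_dirichletLambda_atTop : Tendsto dirichletLambda atTop (𝓝 1) := by
  have h := tendsto_three_rpow_mul_dirichletLambda_sub_one.div_atTop
    (tendsto_rpow_atTop_of_base_gt_one 3 (by norm_num))
  refine (by simpa using h.const_add 1 : Tendsto _ _ _).congr' (.of_forall fun s => ?_)
  rw [mul_div_cancel_left₀ _ (rpow_pos_of_pos three_pos s).ne', add_sub_cancel]

theorem second_prime_limit :
    Tendsto (fun s : ℝ => (1 - 1 / (zetaR s * (1 - (2 : ℝ) ^ (-s)))) ^ (-1 / s)) atTop (nhds 3) := by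
  refine tendsto_rpow_neg_one_div_of_tendsto_rpow_mul three_pos one_pos ?_
  have h := tendsto_three_rpow_mul_dirichletLambda_sub_one.div tendsto_dirichletLambda_atTop
    one_ne_zero
  refine (by simpa using h : Tendsto _ _ _).congr' ?_
  filter_upwards [eventually_gt_atTop 1] with s hs
  have hlam := one_lt_dirichletLambda hs
  rw [Pi.div_apply, zetaR_mul_one_sub_two_rpow hs]
  field_simp
end
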